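/- arXiv:2004.03571 — 5 statements merged into one kernel-verified Lean document; each statement's English description precedes it below -/
import Mathlib

section
/- For any graph G, the stack number of G is at most four times the layered pathwidth of G, i.e., sn(G) ≤ 4·lpw(G). -/
/-!
Order the vertices layer by layer and, inside each layer, by first bag, alternating the
direction of the layers (a boustrophedon order). Two vertices of one layer that share a bag
conflict; ordered by first bag, each vertex conflicts with fewer than `k` earlier ones (they all
lie in its first bag), so greedily `k` colours suffice. An edge receives the colour of its
endpoint that comes first in the bag order, refined by the parity of its lower layer and by
whether that endpoint lies in the upper layer: `4 * k` stacks. Two crossing edges of one stack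
have their coloured endpoints in one layer, one of them between the ends of the other edge in
the bag order, so these endpoints share a bag and cannot have the same colour.
-/

def IsLayering {V : Type*} (G : SimpleGraph V) (ℓ : V → ℤ) : Prop :=
  ∀ v w, G.Adj v w → |ℓ v - ℓ w| ≤ 1

structure IsPathDecomp {V : Type*} (G : SimpleGraph V) (p : ℕ)
    (B : Fin p → Finset V) : Prop where
  mem_bag : ∀ v, ∃ i, v ∈ B i
  interval : ∀ v (i j k : Fin p), i ≤ j → j ≤ k → v ∈ B i → v ∈ B k → v ∈ B j
  edge_bag : ∀ v w, G.Adj v w → ∃ i, v ∈ B i ∧ w ∈ B i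

def LayeredWidthLE {V : Type*} (ℓ : V → ℤ) (p : ℕ) (B : Fin p → Finset V) (k : ℕ) : Prop :=
  ∀ (i : ℤ) (j : Fin p), ((B j).filter fun v => ℓ v = i).card ≤ k

/-- `G` has layered pathwidth at most `k`. -/
def LPWle {V : Type*} (G : SimpleGraph V) (k : ℕ) : Prop :=
  ∃ (ℓ : V → ℤ) (p : ℕ) (B : Fin p → Finset V),
    IsLayering G ℓ ∧ IsPathDecomp G p B ∧ LayeredWidthLE ℓ p B k
/-- `G` has a stack layout with at most `s` stacks: a vertex order (given by an
injective map to `ℕ`) and an assignment of each edge to one of `s` stacks such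
that no two edges in a common stack cross. -/
def StackLayoutLE {V : Type*} (G : SimpleGraph V) (s : ℕ) : Prop :=
  ∃ (f : V → ℕ) (col : V → V → ℕ),
    Function.Injective f ∧
    (∀ v w, G.Adj v w → col v w = col w v) ∧
    (∀ v w, G.Adj v w → col v w < s) ∧
    (∀ v w x y, G.Adj v w → G.Adj x y → col v w = col x y →
      ¬ (f v < f x ∧ f x < f w ∧ f w < f y))

open Function Finset

section Rank

variable {V α : Type*} [Finite V] [LinearOrder α]

theorem exists_rank_of_injective {key : V → α} (hkey : Injective key) :
    ∃ r : V → ℕ, Injective r ∧ ∀ u v, r u < r v ↔ key u < key v := by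
  classical
  cases nonempty_fintype V
  let r : V → ℕ := fun v => #{u | key u < key v}
  have hmono : ∀ u v, key u < key v → r u < r v := fun u v h =>
    card_lt_card <| (ssubset_iff_of_subset fun x hx => by
      simp only [mem_filter, mem_univ, true_and] at hx ⊢
      exact hx.trans h).mpr ⟨u, by simpa using h, by simp⟩
  have hiff : ∀ u v, r u < r v ↔ key u < key v := by
    refine fun u v => ⟨fun h => ?_, hmono u v⟩
    rcases lt_trichotomy (key u) (key v) with h' | h' | h'
    · exact h'
    · exact absurd h (by rw [hkey h']; exact lt_irrefl _)
    · exact absurd (hmono v u h') h.not_gt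
  refine ⟨r, fun u v h => hkey (le_antisymm ?_ ?_), hiff⟩
  · exact not_lt.mp fun h' => ((hiff v u).mpr h').ne' h
  · exact not_lt.mp fun h' => ((hiff u v).mpr h').ne h

theorem exists_injective_rank_refining (φ : V → α) :
    ∃ r : V → ℕ, Injective r ∧ ∀ u v, r u < r v → φ u ≤ φ v := by
  obtain ⟨e, he⟩ := Countable.exists_injective_nat V
  have hkey : Injective fun v => toLex (φ v, e v) := fun u v h =>
    he (Prod.ext_iff.mp (toLex.injective h)).2
  obtain ⟨r, hr, hlt⟩ := exists_rank_of_injective hkey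
  refine ⟨r, hr, fun u v h => ?_⟩
  rcases Prod.Lex.toLex_lt_toLex.mp ((hlt u v).mp h) with h' | ⟨h', -⟩
  exacts [h'.le, h'.le]

end Rank

namespace SimpleGraph

variable {V : Type*} (H : SimpleGraph V) (r : V → ℕ)

noncomputable def greedyColor (v : V) : ℕ :=
  sInf {n | ∀ u, r u < r v → H.Adj u v → greedyColor u ≠ n}
termination_by r v

theorem colorable_of_forall_exists_card_lt {k : ℕ} (hr : Injective r)
    (h : ∀ v, ∃ s : Finset V, #s < k ∧ ∀ u, H.Adj u v → r u < r v → u ∈ s) :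
    H.Colorable k := by
  classical
  have hfree : ∀ v, ∃ n < k, ∀ u, r u < r v → H.Adj u v → H.greedyColor r u ≠ n := by
    intro v
    obtain ⟨s, hs, hsub⟩ := h v
    obtain ⟨n, hn, hns⟩ := exists_mem_notMem_of_card_lt_card
      (s := s.image (H.greedyColor r)) (t := range k) (by simpa using card_image_le.trans_lt hs)
    exact ⟨n, mem_range.mp hn, fun u hu huv he => hns (mem_image.mpr ⟨u, hsub u huv hu, he⟩)⟩
  have hspec : ∀ v, H.greedyColor r v < k ∧
      ∀ u, r u < r v → H.Adj u v → H.greedyColor r u ≠ H.greedyColor r v := by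
    intro v
    obtain ⟨n, hnk, hn⟩ := hfree v
    let S := {n | ∀ u, r u < r v → H.Adj u v → H.greedyColor r u ≠ n}
    have hS : H.greedyColor r v = sInf S := by rw [greedyColor]
    have hnS : n ∈ S := hn
    rw [hS]
    exact ⟨(Nat.sInf_le hnS).trans_lt hnk, Nat.sInf_mem ⟨n, hnS⟩⟩
  refine ⟨Coloring.mk (fun v => ⟨H.greedyColor r v, (hspec v).1⟩) fun {u v} huv he => ?_⟩
  have he : H.greedyColor r u = H.greedyColor r v := congrArg Fin.val he
  rcases lt_or_gt_of_ne (hr.ne huv.ne) with hlt | hlt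
  exacts [(hspec v).2 u hlt huv he, (hspec u).2 v hlt huv.symm he.symm]

end SimpleGraph

namespace IsPathDecomp

variable {V : Type*} {G : SimpleGraph V} {p : ℕ} {B : Fin p → Finset V}
  (hB : IsPathDecomp G p B)
include hB

theorem finite : Finite V := by
  classical
  refine Set.finite_univ_iff.mp ((univ.biUnion B).finite_toSet.subset fun v _ => ?_)
  obtain ⟨i, hi⟩ := hB.mem_bag v
  exact mem_coe.mpr (mem_biUnion.mpr ⟨i, mem_univ _, hi⟩)

noncomputable def firstBag (v : V) : Fin p :=
  wellFounded_lt.min {i | v ∈ B i} (hB.mem_bag v)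

theorem mem_firstBag (v : V) : v ∈ B (hB.firstBag v) :=
  wellFounded_lt.min_mem {i | v ∈ B i} (hB.mem_bag v)

theorem firstBag_le {v : V} {i : Fin p} (h : v ∈ B i) : hB.firstBag v ≤ i :=
  not_lt.mp (wellFounded_lt.not_lt_min {i | v ∈ B i} h)

theorem mem_of_firstBag_le_of_le {v : V} {i j : Fin p} (hi : hB.firstBag v ≤ i) (hij : i ≤ j)
    (hj : v ∈ B j) : v ∈ B i :=
  hB.interval v _ i j hi hij (hB.mem_firstBag v) hj

end IsPathDecomp

section Layout

variable {V : Type*}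

def sameLayerBagGraph {p : ℕ} (ℓ : V → ℤ) (B : Fin p → Finset V) : SimpleGraph V where
  Adj u v := u ≠ v ∧ ℓ u = ℓ v ∧ ∃ i, u ∈ B i ∧ v ∈ B i
  symm := ⟨fun _ _ ⟨h, hl, i, hu, hv⟩ => ⟨h.symm, hl.symm, i, hv, hu⟩⟩
  loopless := ⟨fun _ h => h.1 rfl⟩

@[simp]
theorem sameLayerBagGraph_adj {p : ℕ} {ℓ : V → ℤ} {B : Fin p → Finset V} {u v : V} :
    (sameLayerBagGraph ℓ B).Adj u v ↔ u ≠ v ∧ ℓ u = ℓ v ∧ ∃ i, u ∈ B i ∧ v ∈ B i :=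
  Iff.rfl

theorem colorable_sameLayerBagGraph {G : SimpleGraph V} {p : ℕ} {B : Fin p → Finset V}
    (hB : IsPathDecomp G p B) {ℓ : V → ℤ} {k : ℕ} (hw : LayeredWidthLE ℓ p B k) {r : V → ℕ}
    (hr : Injective r) (hfb : ∀ u v, r u < r v → hB.firstBag u ≤ hB.firstBag v) :
    (sameLayerBagGraph ℓ B).Colorable k := by
  classical
  refine (sameLayerBagGraph ℓ B).colorable_of_forall_exists_card_lt r hr fun v =>
    ⟨{u ∈ B (hB.firstBag v) | ℓ u = ℓ v}.erase v, ?_, ?_⟩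
  · have hv : v ∈ {u ∈ B (hB.firstBag v) | ℓ u = ℓ v} := mem_filter.mpr ⟨hB.mem_firstBag v, rfl⟩
    have := hw (ℓ v) (hB.firstBag v)
    have := card_pos.mpr ⟨v, hv⟩
    rw [card_erase_of_mem hv]
    omega
  · intro u huv hlt
    obtain ⟨hne, hl, i, hu, hv⟩ := sameLayerBagGraph_adj.mp huv
    exact mem_erase.mpr ⟨hne, mem_filter.mpr
      ⟨hB.mem_of_firstBag_le_of_le (hfb u v hlt) (hB.firstBag_le hv) hu, hl⟩⟩

def snakeKey (ℓ : V → ℤ) (r : V → ℕ) (v : V) : ℤ ×ₗ ℤ :=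
  toLex (ℓ v, if ℓ v % 2 = 0 then (r v : ℤ) else -(r v : ℤ))

theorem snakeKey_lt_iff (ℓ : V → ℤ) (r : V → ℕ) (u v : V) :
    snakeKey ℓ r u < snakeKey ℓ r v ↔
      ℓ u < ℓ v ∨ ℓ u = ℓ v ∧ (ℓ u % 2 = 0 ∧ r u < r v ∨ ℓ u % 2 = 1 ∧ r v < r u) := by
  simp only [snakeKey, Prod.Lex.toLex_lt_toLex]
  split_ifs <;> omega

theorem snakeKey_injective (ℓ : V → ℤ) {r : V → ℕ} (hr : Injective r) :
    Injective (snakeKey ℓ r) := by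
  intro u v h
  simp only [snakeKey, EmbeddingLike.apply_eq_iff_eq, Prod.mk.injEq] at h
  apply hr
  split_ifs at h <;> omega

def lowEnd (r : V → ℕ) (v w : V) : V := if r v < r w then v else w

theorem lowEnd_cases (r : V → ℕ) (v w : V) :
    lowEnd r v w = v ∧ r v < r w ∨ lowEnd r v w = w ∧ r w ≤ r v := by
  unfold lowEnd
  split_ifs with h
  exacts [Or.inl ⟨rfl, h⟩, Or.inr ⟨rfl, not_lt.mp h⟩]

theorem lowEnd_comm {r : V → ℕ} (hr : Injective r) {v w : V} (h : v ≠ w) :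
    lowEnd r v w = lowEnd r w v := by
  have := hr.ne h
  unfold lowEnd
  split_ifs <;> first | rfl | omega

def edgeColor {β : Type*} (ℓ : V → ℤ) (r : V → ℕ) (c : V → β) (v w : V) : β × Bool × Bool :=
  (c (lowEnd r v w), decide (min (ℓ v) (ℓ w) % 2 = 0),
    decide (min (ℓ v) (ℓ w) < ℓ (lowEnd r v w)))

theorem edgeColor_comm {β : Type*} (ℓ : V → ℤ) {r : V → ℕ} (hr : Injective r) (c : V → β)
    {v w : V} (h : v ≠ w) : edgeColor ℓ r c v w = edgeColor ℓ r c w v := by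
  simp only [edgeColor, lowEnd_comm hr h, min_comm]

/-- Equal parity bits put both edges into the same two consecutive layers and equal type bits
put both `r`-smaller ends into the same one of them; as consecutive layers run in opposite
directions, the crossing then forces the interleaving (a case check on the four layers). -/
theorem lowEnds_interleave (ℓ : V → ℤ) (r : V → ℕ) {v w x y : V}
    (hvw : |ℓ v - ℓ w| ≤ 1) (hxy : |ℓ x - ℓ y| ≤ 1)
    (hcross : snakeKey ℓ r v < snakeKey ℓ r x ∧ snakeKey ℓ r x < snakeKey ℓ r w ∧
      snakeKey ℓ r w < snakeKey ℓ r y)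
    (hpar : min (ℓ v) (ℓ w) % 2 = 0 ↔ min (ℓ x) (ℓ y) % 2 = 0)
    (htype : min (ℓ v) (ℓ w) < ℓ (lowEnd r v w) ↔ min (ℓ x) (ℓ y) < ℓ (lowEnd r x y)) :
    ℓ (lowEnd r v w) = ℓ (lowEnd r x y) ∧
      (r (lowEnd r v w) < r (lowEnd r x y) ∧ r (lowEnd r x y) < max (r v) (r w) ∨
        r (lowEnd r x y) < r (lowEnd r v w) ∧ r (lowEnd r v w) < max (r x) (r y)) := by
  simp only [snakeKey_lt_iff] at hcross
  rw [abs_le] at hvw hxy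
  rcases lowEnd_cases r v w with ⟨ha, _⟩ | ⟨ha, _⟩ <;>
    rcases lowEnd_cases r x y with ⟨hb, _⟩ | ⟨hb, _⟩ <;>
    rw [ha, hb] at htype ⊢ <;> omega

theorem IsPathDecomp.exists_bag_lowEnd_of_between {G : SimpleGraph V} {p : ℕ} {B : Fin p → Finset V}
    (hB : IsPathDecomp G p B) {r : V → ℕ}
    (hfb : ∀ u v, r u < r v → hB.firstBag u ≤ hB.firstBag v) {v w x : V}
    (hvw : ∃ i, v ∈ B i ∧ w ∈ B i) (hx : r (lowEnd r v w) < r x) (hxvw : r x < max (r v) (r w)) :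
    ∃ i, lowEnd r v w ∈ B i ∧ x ∈ B i := by
  obtain ⟨m, hv, hw⟩ := hvw
  have hxm : hB.firstBag x ≤ m := by
    rcases lt_max_iff.mp hxvw with h | h
    exacts [(hfb _ _ h).trans (hB.firstBag_le hv), (hfb _ _ h).trans (hB.firstBag_le hw)]
  have ha : lowEnd r v w ∈ B m := by
    rcases lowEnd_cases r v w with ⟨h, -⟩ | ⟨h, -⟩ <;> rw [h] <;> assumption
  exact ⟨_, hB.mem_of_firstBag_le_of_le (hfb _ _ hx) hxm ha, hB.mem_firstBag x⟩

theorem not_cross_of_edgeColor_eq {β : Type*} {G : SimpleGraph V} {ℓ : V → ℤ}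
    (hℓ : IsLayering G ℓ) {p : ℕ} {B : Fin p → Finset V} (hB : IsPathDecomp G p B)
    {r : V → ℕ} (hfb : ∀ u v, r u < r v → hB.firstBag u ≤ hB.firstBag v)
    (c : (sameLayerBagGraph ℓ B).Coloring β) {v w x y : V} (hvw : G.Adj v w) (hxy : G.Adj x y)
    (hcol : edgeColor ℓ r c v w = edgeColor ℓ r c x y) :
    ¬ (snakeKey ℓ r v < snakeKey ℓ r x ∧ snakeKey ℓ r x < snakeKey ℓ r w ∧
      snakeKey ℓ r w < snakeKey ℓ r y) := by
  intro hcross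
  simp only [edgeColor, Prod.mk.injEq, decide_eq_decide] at hcol
  obtain ⟨hc, hpar, htype⟩ := hcol
  obtain ⟨hlayer, hbetween⟩ := lowEnds_interleave ℓ r (hℓ v w hvw) (hℓ x y hxy) hcross hpar htype
  refine c.valid (sameLayerBagGraph_adj.mpr ⟨fun h => ?_, hlayer, ?_⟩) hc
  · rcases hbetween with ⟨h', -⟩ | ⟨h', -⟩ <;> rw [h] at h' <;> exact lt_irrefl _ h'
  · rcases hbetween with ⟨h1, h2⟩ | ⟨h1, h2⟩
    · exact hB.exists_bag_lowEnd_of_between hfb (hB.edge_bag v w hvw) h1 h2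
    · obtain ⟨i, hi, hi'⟩ := hB.exists_bag_lowEnd_of_between hfb (hB.edge_bag x y hxy) h1 h2
      exact ⟨i, hi', hi⟩

theorem stackLayoutLE_of_key {α β : Type*} [Finite V] [LinearOrder α] [Fintype β]
    {G : SimpleGraph V} {key : V → α} (hkey : Injective key) (col : V → V → β)
    (hsymm : ∀ v w, G.Adj v w → col v w = col w v)
    (hcross : ∀ v w x y, G.Adj v w → G.Adj x y → col v w = col x y →
      ¬ (key v < key x ∧ key x < key w ∧ key w < key y)) :
    StackLayoutLE G (Fintype.card β) := by
  obtain ⟨f, hf, hlt⟩ := exists_rank_of_injective hkey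
  refine ⟨f, fun v w => Fintype.equivFin β (col v w), hf, fun v w h => by simp only [hsymm v w h],
    fun v w _ => (Fintype.equivFin β _).isLt, fun v w x y hvw hxy h => ?_⟩
  simp only [hlt]
  exact hcross v w x y hvw hxy ((Fintype.equivFin β).injective (Fin.ext h))

end Layout

/-- for every graph `G`, `sn(G) ≤ 4 · lpw(G)`. -/
theorem stack_number_le_four_mul_layered_pathwidth
    {V : Type*} (G : SimpleGraph V) (k : ℕ) (h : LPWle G k) :
    StackLayoutLE G (4 * k) := by
  obtain ⟨ℓ, p, B, hℓ, hB, hw⟩ := h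
  have := hB.finite
  obtain ⟨r, hr, hfb⟩ := exists_injective_rank_refining hB.firstBag
  obtain ⟨c⟩ := colorable_sameLayerBagGraph hB hw hr hfb
  have hcard : Fintype.card (Fin k × Bool × Bool) = 4 * k := by
    simp only [Fintype.card_prod, Fintype.card_fin, Fintype.card_bool]; ring
  rw [← hcard]
  exact stackLayoutLE_of_key (snakeKey_injective ℓ hr) (edgeColor ℓ r c)
    (fun v w h => edgeColor_comm ℓ hr c h.ne)
    (fun v w x y hvw hxy => not_cross_of_edgeColor_eq hℓ hB hfb c hvw hxy)
end

section
/- For every graph G and every positive integer s, the layered pathwidth of G is at most s times the s-weak layered pathwidth of G: lpw(G) ≤ s·lpw_s(G). -/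
/-- An `s`-weak layering: layers of adjacent vertices differ by at most `s`. -/
def IsWeakLayering {V : Type*} (G : SimpleGraph V) (s : ℕ) (ℓ : V → ℤ) : Prop :=
  ∀ v w, G.Adj v w → |ℓ v - ℓ w| ≤ (s : ℤ)

/-- `G` has `s`-weak layered pathwidth at most `k`. -/
def WeakLPWle {V : Type*} (G : SimpleGraph V) (s k : ℕ) : Prop :=
  ∃ (ℓ : V → ℤ) (p : ℕ) (B : Fin p → Finset V),
    IsWeakLayering G s ℓ ∧ IsPathDecomp G p B ∧ LayeredWidthLE ℓ p B k

/-!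
Dividing an `s`-weak layering by `s` (rounding down) gives a layering, since adjacent
layers `a, b` with `|a - b| ≤ s` have `|⌊a/s⌋ - ⌊b/s⌋| ≤ 1`. The new layer `i` is the union
of the `s` old layers `i*s, …, i*s + s - 1`, so each bag meets it in at most `s * k`
vertices.
-/

namespace Int

theorem ediv_le_ediv_add_of_le_add_mul {a b s t : ℤ} (hs : 0 < s) (h : a ≤ b + t * s) :
    a / s ≤ b / s + t :=
  Int.add_mul_ediv_right b t hs.ne' ▸ Int.ediv_le_ediv hs h

theorem abs_ediv_sub_ediv_le {a b s t : ℤ} (hs : 0 < s) (h : |a - b| ≤ s * t) :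
    |a / s - b / s| ≤ t := by
  rw [abs_sub_le_iff] at h ⊢
  constructor
  · linarith [ediv_le_ediv_add_of_le_add_mul (a := a) (b := b) (t := t) hs (by linarith)]
  · linarith [ediv_le_ediv_add_of_le_add_mul (a := b) (b := a) (t := t) hs (by linarith)]

end Int

section Layering

variable {V : Type*} {G : SimpleGraph V} {ℓ : V → ℤ} {s : ℕ}

theorem isWeakLayering_one_iff : IsWeakLayering G 1 ℓ ↔ IsLayering G ℓ := by
  simp only [IsWeakLayering, IsLayering, Nat.cast_one]

theorem IsWeakLayering.ediv {t : ℕ} (hℓ : IsWeakLayering G (s * t) ℓ) (hs : 0 < s) :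
    IsWeakLayering G t fun v => ℓ v / s := fun v w hvw =>
  Int.abs_ediv_sub_ediv_le (by exact_mod_cast hs) (by exact_mod_cast hℓ v w hvw)

open Finset in
theorem LayeredWidthLE.ediv {p k : ℕ} {B : Fin p → Finset V} (hB : LayeredWidthLE ℓ p B k)
    (hs : 0 < s) : LayeredWidthLE (fun v => ℓ v / s) p B (s * k) := by
  classical
  intro i j
  have hs' : (0 : ℤ) < s := by exact_mod_cast hs
  have hmaps : ∀ v ∈ (B j).filter (fun v => ℓ v / s = i), ℓ v ∈ Ico (i * s) (i * s + s) :=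
    fun v hv => mem_Ico.2 ((Int.ediv_eq_iff_of_pos hs').1 (mem_filter.1 hv).2)
  have hfiber : ∀ a ∈ Ico (i * s) (i * s + s),
      (((B j).filter fun v => ℓ v / s = i).filter fun v => ℓ v = a).card ≤ k :=
    fun a _ => (card_le_card (filter_subset_filter _ (filter_subset _ _))).trans (hB a j)
  calc ((B j).filter fun v => ℓ v / s = i).card
      ≤ k * (Ico (i * s) (i * s + s)).card := card_le_mul_card_image_of_maps_to hmaps k hfiber
    _ = s * k := by simp [Int.card_Ico, mul_comm]

end Layering

/-- `lpw(G) ≤ s · lpw_s(G)` for every graph `G` and positive `s`. -/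
theorem lpw_le_s_mul_weak_lpw
    {V : Type*} (G : SimpleGraph V) (s k : ℕ) (hs : 0 < s)
    (h : WeakLPWle G s k) :
    LPWle G (s * k) := by
  obtain ⟨ℓ, p, B, hℓ, hB, hwidth⟩ := h
  have hℓ' : IsWeakLayering G (s * 1) ℓ := by rwa [mul_one]
  exact ⟨fun v => ℓ v / s, p, B, isWeakLayering_one_iff.1 (hℓ'.ediv hs), hB, hwidth.ediv hs⟩
end

section
/- Any path decomposition of a graph G can be transformed into a left-normal path decomposition of G (one in which distinct vertices have distinct first bag indices) without increasing the layered width with respect to any fixed layering. -/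
/-- A path decomposition is left-normal if no bag is the first bag of two
distinct vertices, i.e. distinct vertices have distinct first bag indices. -/
def LeftNormal {V : Type*} (p : ℕ) (B : Fin p → Finset V) : Prop :=
  ∀ v w, v ≠ w → ∀ i : Fin p, v ∈ B i → w ∈ B i →
    (∃ j, j < i ∧ v ∈ B j) ∨ (∃ j, j < i ∧ w ∈ B j)

/-!
Key every vertex by its first bag, breaking ties injectively: this gives an injection `key` of
the vertices into a finer index set, with a monotone map `φ` back to the old indices. New bag
`j` keeps those vertices of old bag `φ j` whose key is at most `j`. Every new bag lies inside an
old one, so the layered width does not grow, and each vertex first appears exactly at its own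
key, so distinct vertices are introduced in distinct bags.
-/

section RefineBags

variable {V : Type*} {p q : ℕ}

def IsFirstBag (B : Fin p → Finset V) (v : V) (i : Fin p) : Prop :=
  v ∈ B i ∧ ∀ j, v ∈ B j → i ≤ j

lemma IsPathDecomp.exists_isFirstBag {G : SimpleGraph V} {B : Fin p → Finset V}
    (hB : IsPathDecomp G p B) (v : V) : ∃ i, IsFirstBag B v i := by
  obtain ⟨i, hi⟩ := hB.mem_bag v
  obtain ⟨a, ha, hmin⟩ := wellFounded_lt.has_min {j | v ∈ B j} ⟨i, hi⟩
  exact ⟨a, ha, fun j hj => not_lt.mp (hmin j hj)⟩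

lemma IsPathDecomp.finite_s5 {G : SimpleGraph V} {B : Fin p → Finset V}
    (hB : IsPathDecomp G p B) : Finite V :=
  Finite.of_surjective (fun x : Σ i, B i => (x.2 : V)) fun v =>
    let ⟨i, hi⟩ := hB.mem_bag v
    ⟨⟨i, v, hi⟩, rfl⟩

lemma exists_monotone_comp_injective [Finite V] (f : V → Fin p) :
    ∃ (q : ℕ) (φ : Fin q → Fin p) (key : V → Fin q),
      Monotone φ ∧ Function.Injective key ∧ ∀ v, φ (key v) = f v := by
  let r := Finite.equivFin V
  refine ⟨p * Nat.card V, fun j => (finProdFinEquiv.symm j).1,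
    fun v => finProdFinEquiv (f v, r v), fun a b hab => ?_, ?_, fun v => by simp⟩
  · show a.divNat ≤ b.divNat
    exact Nat.div_le_div_right hab
  · intro v w h
    exact r.injective (congrArg Prod.snd (finProdFinEquiv.injective h))

def refineBags (B : Fin p → Finset V) (φ : Fin q → Fin p) (key : V → Fin q)
    (j : Fin q) : Finset V :=
  (B (φ j)).filter (key · ≤ j)

variable {B : Fin p → Finset V} {φ : Fin q → Fin p} {key : V → Fin q}

lemma IsPathDecomp.refineBags {G : SimpleGraph V} (hB : IsPathDecomp G p B)
    (hφ : Monotone φ) (hkey : ∀ v, IsFirstBag B v (φ (key v))) :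
    IsPathDecomp G q (_root_.refineBags B φ key) := by
  have mem_of_le : ∀ u w i, key u ≤ key w → u ∈ B i → w ∈ B i →
      u ∈ _root_.refineBags B φ key (key w) := fun u w i hle hu hw =>
    Finset.mem_filter.mpr
      ⟨hB.interval u _ _ _ (hφ hle) ((hkey w).2 i hw) (hkey u).1 hu, hle⟩
  refine ⟨fun v => ⟨key v, mem_of_le v v (φ (key v)) le_rfl (hkey v).1 (hkey v).1⟩,
    fun v a b c hab hbc ha hc => ?_, fun v w hvw => ?_⟩
  · rw [_root_.refineBags, Finset.mem_filter] at *
    exact ⟨hB.interval v _ _ _ (hφ hab) (hφ hbc) ha.1 hc.1, ha.2.trans hab⟩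
  · obtain ⟨i, hv, hw⟩ := hB.edge_bag v w hvw
    rcases le_total (key v) (key w) with hle | hle
    · exact ⟨key w, mem_of_le v w i hle hv hw, mem_of_le w w i le_rfl hw hw⟩
    · exact ⟨key v, mem_of_le v v i le_rfl hv hv, mem_of_le w v i hle hw hv⟩

lemma leftNormal_refineBags (hinj : Function.Injective key)
    (hmem : ∀ v, v ∈ B (φ (key v))) : LeftNormal q (refineBags B φ key) := by
  intro v w hvw i hv hw
  have hv' := (Finset.mem_filter.mp hv).2
  have hw' := (Finset.mem_filter.mp hw).2
  have self_mem : ∀ u, u ∈ refineBags B φ key (key u) := fun u =>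
    Finset.mem_filter.mpr ⟨hmem u, le_rfl⟩
  rcases hv'.lt_or_eq with hlt | heq
  · exact Or.inl ⟨key v, hlt, self_mem v⟩
  · refine Or.inr ⟨key w, hw'.lt_of_ne fun h => hvw (hinj ?_), self_mem w⟩
    rw [heq, h]

lemma LayeredWidthLE.refineBags {ℓ : V → ℤ} {k : ℕ} (hw : LayeredWidthLE ℓ p B k) :
    LayeredWidthLE ℓ q (_root_.refineBags B φ key) k := fun z j =>
  (Finset.card_le_card (Finset.filter_subset_filter _ (Finset.filter_subset _ _))).trans
    (hw z (φ j))

end RefineBags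

/-- every path decomposition can be transformed into a left-normal
one without increasing the layered width with respect to any fixed layering. -/
theorem exists_leftNormal_path_decomp
    {V : Type*} (G : SimpleGraph V) (ℓ : V → ℤ) (p : ℕ) (B : Fin p → Finset V)
    (k : ℕ) (hpd : IsPathDecomp G p B) (hw : LayeredWidthLE ℓ p B k) :
    ∃ (q : ℕ) (B' : Fin q → Finset V),
      IsPathDecomp G q B' ∧ LeftNormal q B' ∧ LayeredWidthLE ℓ q B' k := by
  have := hpd.finite_s5
  choose first hfirst using hpd.exists_isFirstBag
  obtain ⟨q, φ, key, hφ, hinj, hfac⟩ := exists_monotone_comp_injective first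
  have hkey : ∀ v, IsFirstBag B v (φ (key v)) := fun v => hfac v ▸ hfirst v
  exact ⟨q, refineBags B φ key, hpd.refineBags hφ hkey,
    leftNormal_refineBags hinj fun v => (hkey v).1, hw.refineBags⟩
end

section
/- Let G₁ and G₂ be graphs with V(G₁) ∩ V(G₂) = C, where C is a clique (or any common vertex set contained both in the last bag of a path decomposition of G₁ and the first bag of a path decomposition of G₂), and suppose every edge of G = G₁ ∪ G₂ lies in G₁ or G₂. If G₁ has a layered path decomposition of layered width at most k with C contained in the last bag, G₂ has a layered path decomposition of layered width at most k with C contained in the first bag, and the two layerings agree on C after shifting the second layering by a constant, then G has a layered path decomposition of layered width at most k obtained by concatenating the bag sequences and shifting the second layering. -/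
open scoped Classical in
/-- A path decomposition of the part of `G` induced on a vertex set `S`:
bags lie in `S`, cover `S`, vertices occupy intervals of bags, and every edge
of `G` with both endpoints in `S` is covered. -/
structure IsPathDecompOn {V : Type*} (G : SimpleGraph V) (S : Set V) (p : ℕ)
    (B : Fin p → Finset V) : Prop where
  bag_subset : ∀ i, ∀ v ∈ B i, v ∈ S
  mem_bag : ∀ v ∈ S, ∃ i, v ∈ B i
  interval : ∀ v (i j k : Fin p), i ≤ j → j ≤ k → v ∈ B i → v ∈ B k → v ∈ B j
  edge_bag : ∀ v w, G.Adj v w → v ∈ S → w ∈ S → ∃ i, v ∈ B i ∧ w ∈ B i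

section Gluing

variable {V : Type*} {G : SimpleGraph V}

namespace IsPathDecompOn

variable {S : Set V} {p : ℕ} {B : Fin p → Finset V}

theorem mem_of_le_of_mem_last (h : IsPathDecompOn G S p B) (hp : 0 < p) {v : V} {i j : Fin p}
    (hij : i ≤ j) (hi : v ∈ B i) (hlast : v ∈ B ⟨p - 1, Nat.sub_lt hp Nat.one_pos⟩) :
    v ∈ B j :=
  h.interval v i j _ hij (Fin.le_def.2 (by simp only; omega)) hi hlast

theorem mem_of_le_of_mem_first (h : IsPathDecompOn G S p B) (hp : 0 < p) {v : V} {i j : Fin p}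
    (hij : i ≤ j) (hj : v ∈ B j) (hfirst : v ∈ B ⟨0, hp⟩) :
    v ∈ B i :=
  h.interval v _ i j (Fin.le_def.2 (Nat.zero_le _)) hij hfirst hj

theorem append {S₁ S₂ : Set V} {q : ℕ} {B₁ : Fin p → Finset V} {B₂ : Fin q → Finset V}
    (h₁ : IsPathDecompOn G S₁ p B₁) (h₂ : IsPathDecompOn G S₂ q B₂)
    (hcover : S₁ ∪ S₂ = Set.univ)
    (hedges : ∀ v w, G.Adj v w → (v ∈ S₁ ∧ w ∈ S₁) ∨ (v ∈ S₂ ∧ w ∈ S₂))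
    (hlast : ∀ v ∈ S₁ ∩ S₂, ∀ i j, i ≤ j → v ∈ B₁ i → v ∈ B₁ j)
    (hfirst : ∀ v ∈ S₁ ∩ S₂, ∀ i j, i ≤ j → v ∈ B₂ j → v ∈ B₂ i) :
    IsPathDecomp G (p + q) (Fin.append B₁ B₂) where
  mem_bag v := by
    rcases (hcover ▸ Set.mem_univ v : v ∈ S₁ ∪ S₂) with hv | hv
    · obtain ⟨i, hi⟩ := h₁.mem_bag v hv
      exact ⟨Fin.castAdd q i, by rwa [Fin.append_left]⟩
    · obtain ⟨i, hi⟩ := h₂.mem_bag v hv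
      exact ⟨Fin.natAdd p i, by rwa [Fin.append_right]⟩
  edge_bag v w hvw := by
    rcases hedges v w hvw with ⟨hv, hw⟩ | ⟨hv, hw⟩
    · obtain ⟨i, hi⟩ := h₁.edge_bag v w hvw hv hw
      exact ⟨Fin.castAdd q i, by rwa [Fin.append_left]⟩
    · obtain ⟨i, hi⟩ := h₂.edge_bag v w hvw hv hw
      exact ⟨Fin.natAdd p i, by rwa [Fin.append_right]⟩
  interval v i j k hij hjk hi hk := by
    cases j using Fin.addCases with
    | left j =>
      cases i using Fin.addCases with
      | right i => simp only [Fin.le_def, Fin.val_castAdd, Fin.val_natAdd] at hij; omega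
      | left i =>
        rw [Fin.append_left] at hi ⊢
        have hij' : i ≤ j := by simpa only [Fin.le_def, Fin.val_castAdd] using hij
        cases k using Fin.addCases with
        | left k =>
          rw [Fin.append_left] at hk
          have hjk' : j ≤ k := by simpa only [Fin.le_def, Fin.val_castAdd] using hjk
          exact h₁.interval v i j k hij' hjk' hi hk
        | right k =>
          rw [Fin.append_right] at hk
          exact hlast v ⟨h₁.bag_subset i v hi, h₂.bag_subset k v hk⟩ i j hij' hi
    | right j =>
      cases k using Fin.addCases with
      | left k => simp only [Fin.le_def, Fin.val_castAdd, Fin.val_natAdd] at hjk; omega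
      | right k =>
        rw [Fin.append_right] at hk ⊢
        have hjk' : j ≤ k := (Fin.natAdd_le_natAdd_iff p).1 hjk
        cases i using Fin.addCases with
        | left i =>
          rw [Fin.append_left] at hi
          exact hfirst v ⟨h₁.bag_subset i v hi, h₂.bag_subset k v hk⟩ j k hjk' hk
        | right i =>
          rw [Fin.append_right] at hi
          exact h₂.interval v i j k ((Fin.natAdd_le_natAdd_iff p).1 hij) hjk' hi hk

end IsPathDecompOn

namespace LayeredWidthLE

variable {ℓ ℓ' : V → ℤ} {p q k : ℕ} {B : Fin p → Finset V}

theorem congr (h : LayeredWidthLE ℓ p B k) (hℓ : ∀ j, ∀ v ∈ B j, ℓ' v = ℓ v) :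
    LayeredWidthLE ℓ' p B k := fun i j => by
  rw [Finset.filter_congr fun v hv => by rw [hℓ j v hv]]
  exact h i j

theorem add_const (h : LayeredWidthLE ℓ p B k) (r : ℤ) :
    LayeredWidthLE (fun v => ℓ v + r) p B k := fun i j => by
  simpa only [← eq_sub_iff_add_eq] using h (i - r) j

theorem append {B₂ : Fin q → Finset V} (h₁ : LayeredWidthLE ℓ p B k)
    (h₂ : LayeredWidthLE ℓ q B₂ k) :
    LayeredWidthLE ℓ (p + q) (Fin.append B B₂) k := fun i j => by
  cases j using Fin.addCases
  · rw [Fin.append_left]; exact h₁ i _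
  · rw [Fin.append_right]; exact h₂ i _

end LayeredWidthLE

end Gluing

open scoped Classical in
/-- gluing two layered path decompositions along a common vertex
set `C = V₁ ∩ V₂` contained in the last bag of the first decomposition and the
first bag of the second, whose layerings agree on `C` after shifting the
second by `r`, yields a layered path decomposition of the whole graph of the
same layered width. -/
theorem glue_layered_path_decompositions
    {V : Type*} (G : SimpleGraph V) (V₁ V₂ : Set V)
    (hcover : V₁ ∪ V₂ = Set.univ)
    (hedges : ∀ v w, G.Adj v w → (v ∈ V₁ ∧ w ∈ V₁) ∨ (v ∈ V₂ ∧ w ∈ V₂))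
    (k : ℕ) (ℓ₁ ℓ₂ : V → ℤ) (r : ℤ)
    (p q : ℕ) (hp : 0 < p) (hq : 0 < q)
    (B₁ : Fin p → Finset V) (B₂ : Fin q → Finset V)
    (hpd₁ : IsPathDecompOn G V₁ p B₁) (hpd₂ : IsPathDecompOn G V₂ q B₂)
    (hlay₁ : ∀ v w, G.Adj v w → v ∈ V₁ → w ∈ V₁ → |ℓ₁ v - ℓ₁ w| ≤ 1)
    (hlay₂ : ∀ v w, G.Adj v w → v ∈ V₂ → w ∈ V₂ → |ℓ₂ v - ℓ₂ w| ≤ 1)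
    (hw₁ : ∀ (i : ℤ) (j : Fin p), ((B₁ j).filter fun v => ℓ₁ v = i).card ≤ k)
    (hw₂ : ∀ (i : ℤ) (j : Fin q), ((B₂ j).filter fun v => ℓ₂ v = i).card ≤ k)
    (hClast : ∀ v ∈ V₁ ∩ V₂, v ∈ B₁ ⟨p - 1, Nat.sub_lt hp Nat.one_pos⟩)
    (hCfirst : ∀ v ∈ V₁ ∩ V₂, v ∈ B₂ ⟨0, hq⟩)
    (hagree : ∀ v ∈ V₁ ∩ V₂, ℓ₂ v + r = ℓ₁ v) :
    IsLayering G (fun v => if v ∈ V₁ then ℓ₁ v else ℓ₂ v + r) ∧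
    ∃ (m : ℕ) (Bf : Fin m → Finset V),
      IsPathDecomp G m Bf ∧
      LayeredWidthLE (fun v => if v ∈ V₁ then ℓ₁ v else ℓ₂ v + r) m Bf k := by
  set ℓ : V → ℤ := fun v => if v ∈ V₁ then ℓ₁ v else ℓ₂ v + r
  have hℓ₁ : ∀ v ∈ V₁, ℓ v = ℓ₁ v := fun v hv => if_pos hv
  have hℓ₂ : ∀ v ∈ V₂, ℓ v = ℓ₂ v + r := fun v hv => by
    by_cases h : v ∈ V₁
    · exact (if_pos h).trans (hagree v ⟨h, hv⟩).symm
    · exact if_neg h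
  refine ⟨fun v w hvw => ?_, p + q, Fin.append B₁ B₂, hpd₁.append hpd₂ hcover hedges
    (fun v hv i j hij hi => hpd₁.mem_of_le_of_mem_last hp hij hi (hClast v hv))
    (fun v hv i j hij hj => hpd₂.mem_of_le_of_mem_first hq hij hj (hCfirst v hv)), ?_⟩
  · rcases hedges v w hvw with ⟨hv, hw⟩ | ⟨hv, hw⟩
    · rw [hℓ₁ v hv, hℓ₁ w hw]
      exact hlay₁ v w hvw hv hw
    · rw [hℓ₂ v hv, hℓ₂ w hw, add_sub_add_right_eq_sub]
      exact hlay₂ v w hvw hv hw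
  · exact (LayeredWidthLE.congr hw₁ fun j v hv => hℓ₁ v (hpd₁.bag_subset j v hv)).append
      ((LayeredWidthLE.add_const hw₂ r).congr fun j v hv => hℓ₂ v (hpd₂.bag_subset j v hv))
end

section
/- Let ℓ be a layering of a graph G and let σ be a total order on V(G) such that vertices in strictly lower layers come strictly earlier in σ. Suppose vw and xy are edges with left endpoints v and x (with respect to some order ≺_B refining each layer) satisfying ℓ(v) = ℓ(x), and that within each even layer σ agrees with ≺_B while within each odd layer σ reverses ≺_B. If ℓ(v) = ℓ(x) = i is even, v ≺_B x, and the edges cross as v <σ y <σ w <σ x, then a contradiction follows; i.e., this crossing pattern is impossible. -/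
/-! Since `σ` lists lower layers first, everything strictly between `v` and `x` in `σ` lies in
their common layer `i`; in particular `y` and `w` do. On the even layer `i` the order `σ`
agrees with `≺_B`, so `y ≺_B w ≺_B x`, contradicting that `x` is the left endpoint of `xy`. -/

section LayerRespectingOrder

variable {V : Type*} {ℓ : V → ℤ} {f : V → ℕ}

theorem layer_le_of_lt (href : ∀ u u' : V, ℓ u < ℓ u' → f u < f u') {u u' : V}
    (h : f u < f u') : ℓ u ≤ ℓ u' :=
  not_lt.mp fun hlt => (href u' u hlt).not_gt h

theorem layer_eq_of_lt_of_lt (href : ∀ u u' : V, ℓ u < ℓ u' → f u < f u') {a u c : V}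
    (hac : ℓ a = ℓ c) (hau : f a < f u) (huc : f u < f c) : ℓ u = ℓ a :=
  le_antisymm (hac ▸ layer_le_of_lt href huc) (layer_le_of_lt href hau)

end LayerRespectingOrder

theorem case_two_crossing_impossible_general
    {V : Type*} (ℓ : V → ℤ) (b f : V → ℕ)
    (href : ∀ u u' : V, ℓ u < ℓ u' → f u < f u')
    (heven : ∀ u u' : V, ℓ u = ℓ u' → Even (ℓ u) → (b u < b u' ↔ f u < f u'))
    (v w x y : V)
    (hleft₂ : b x < b y)
    (hsame : ℓ v = ℓ x) (hevenlayer : Even (ℓ v))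
    (hcross : f v < f y ∧ f y < f w ∧ f w < f x) :
    False := by
  obtain ⟨hvy, hyw, hwx⟩ := hcross
  have hy : ℓ y = ℓ v := layer_eq_of_lt_of_lt href hsame hvy (hyw.trans hwx)
  have hw : ℓ w = ℓ v := layer_eq_of_lt_of_lt href hsame (hvy.trans hyw) hwx
  have hbyw : b y < b w := (heven y w (hy.trans hw.symm) (hy ▸ hevenlayer)).mpr hyw
  have hbwx : b w < b x := (heven w x (hw.trans hsame) (hw ▸ hevenlayer)).mpr hwx
  exact lt_asymm hleft₂ (hbyw.trans hbwx)

/-- Case 2 of the crossing analysis: with `σ` (encoded by `f`)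
refining the layering, agreeing with `≺_B` (encoded by `b`) on even layers and
reversing it on odd layers, two edges `vw`, `xy` with left endpoints `v, x` in
a common even layer cannot cross in the pattern `v <σ y <σ w <σ x`. -/
theorem case_two_crossing_impossible
    {V : Type*} (G : SimpleGraph V) (ℓ : V → ℤ) (b f : V → ℕ)
    (hb : Function.Injective b) (hf : Function.Injective f)
    (hlay : IsLayering G ℓ)
    (href : ∀ u u' : V, ℓ u < ℓ u' → f u < f u')
    (heven : ∀ u u' : V, ℓ u = ℓ u' → Even (ℓ u) → (b u < b u' ↔ f u < f u'))
    (hodd : ∀ u u' : V, ℓ u = ℓ u' → Odd (ℓ u) → (b u < b u' ↔ f u' < f u))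
    (v w x y : V) (hvw : G.Adj v w) (hxy : G.Adj x y)
    (hleft₁ : b v < b w) (hleft₂ : b x < b y)
    (hsame : ℓ v = ℓ x) (hevenlayer : Even (ℓ v))
    (hB : b v < b x)
    (hcross : f v < f y ∧ f y < f w ∧ f w < f x) :
    False :=
  case_two_crossing_impossible_general ℓ b f href heven v w x y hleft₂ hsame hevenlayer hcross
end
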